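/- For probability distributions r, s on a finite set, the Kullback–Leibler divergence in bits satisfies D(r‖s) ≥ -2·log₂ F(r,s), where F(r,s) = Σ_m √(r(m)·s(m)) is the Bhattacharyya coefficient. -/

import Mathlib

/-- Kullback–Leibler divergence in bits. -/
noncomputable def klDiv2 {S : Type} [Fintype S] (r s : S → ℝ) : ℝ :=
  ∑ m, r m * Real.logb 2 (r m / s m)

/-!
Put `F = ∑ m, √(r m * s m)` and `q m = √(r m * s m) / F`, a probability distribution. On the
support of `r`, `log (r / q) = ½ log (r / s) + log F`, so `D(r‖s) = 2 D(r‖q) - 2 log₂ F`, and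
Gibbs' inequality `D(r‖q) ≥ 0` gives the claim.
-/

open Real Finset

/-- **Gibbs' inequality**, termwise form. -/
theorem Real.sub_le_mul_log_div {r q : ℝ} (hr : 0 ≤ r) (hq : 0 ≤ q) (hrq : 0 < r → 0 < q) :
    r - q ≤ r * log (r / q) := by
  rcases hr.eq_or_lt with rfl | hr
  · simpa using hq
  have hq := hrq hr
  have hlog : r * log (q / r) ≤ r * (q / r - 1) :=
    mul_le_mul_of_nonneg_left (log_le_sub_one_of_pos (div_pos hq hr)) hr.le
  have hlin : r * (q / r - 1) = q - r := by field_simp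
  rw [← inv_div, log_inv]
  linarith

theorem Real.sum_mul_log_div_nonneg {ι : Type*} {t : Finset ι} {r q : ι → ℝ}
    (hr : ∀ i ∈ t, 0 ≤ r i) (hq : ∀ i ∈ t, 0 ≤ q i) (hrq : ∀ i ∈ t, 0 < r i → 0 < q i)
    (hsum : ∑ i ∈ t, q i ≤ ∑ i ∈ t, r i) :
    0 ≤ ∑ i ∈ t, r i * log (r i / q i) :=
  calc 0 ≤ ∑ i ∈ t, (r i - q i) := by rw [sum_sub_distrib]; linarith
    _ ≤ _ := sum_le_sum fun i hi => sub_le_mul_log_div (hr i hi) (hq i hi) (hrq i hi)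

theorem Real.mul_log_div_sqrt_mul_div {r s c : ℝ} (hr : 0 ≤ r) (hc : c ≠ 0)
    (hrs : 0 < r → 0 < s) : r * log (r / (√(r * s) / c)) = r * log (r / s) / 2 + r * log c := by
  rcases hr.eq_or_lt with rfl | hr
  · simp
  have hs := hrs hr
  have hsqrt : √(r * s) ≠ 0 := (sqrt_pos.2 (mul_pos hr hs)).ne'
  rw [div_div_eq_mul_div, log_div (mul_ne_zero hr.ne' hc) hsqrt, log_mul hr.ne' hc,
    log_sqrt (mul_pos hr hs).le, log_mul hr.ne' hs.ne', log_div hr.ne' hs.ne']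
  ring

theorem Real.sum_sqrt_mul_pos {ι : Type*} [Fintype ι] {r s : ι → ℝ} (hr1 : ∑ i, r i = 1)
    (hrs : ∀ i, 0 < r i → 0 < s i) : 0 < ∑ i, √(r i * s i) := by
  obtain ⟨i, -, hi⟩ : ∃ i ∈ univ, (0 : ι → ℝ) i < r i :=
    exists_lt_of_sum_lt (by simp [hr1])
  exact sum_pos' (fun j _ => sqrt_nonneg _) ⟨i, mem_univ i, sqrt_pos.2 (mul_pos hi (hrs i hi))⟩

theorem Real.neg_two_mul_log_sum_sqrt_mul_le {ι : Type*} [Fintype ι] {r s : ι → ℝ}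
    (hr : ∀ i, 0 ≤ r i) (hr1 : ∑ i, r i = 1) (hrs : ∀ i, 0 < r i → 0 < s i) :
    -2 * log (∑ i, √(r i * s i)) ≤ ∑ i, r i * log (r i / s i) := by
  set F := ∑ i, √(r i * s i)
  have hF : 0 < F := sum_sqrt_mul_pos hr1 hrs
  have gibbs : 0 ≤ ∑ i, r i * log (r i / (√(r i * s i) / F)) := by
    refine sum_mul_log_div_nonneg (fun i _ => hr i) (fun i _ => by positivity)
      (fun i _ hri => div_pos (sqrt_pos.2 (mul_pos hri (hrs i hri))) hF) ?_
    rw [← sum_div, div_self hF.ne', hr1]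
  simp only [mul_log_div_sqrt_mul_div (hr _) hF.ne' (hrs _), sum_add_distrib, ← sum_div,
    ← sum_mul, hr1, one_mul] at gibbs
  linarith

theorem klDiv_ge_neg_two_log_fid_general {S : Type} [Fintype S]
    (r s : S → ℝ) (hr : ∀ m, 0 ≤ r m)
    (hrs : ∑ m, r m = 1)
    (habs : ∀ m, 0 < r m → 0 < s m) :
    klDiv2 r s ≥ -2 * Real.logb 2 (∑ m, Real.sqrt (r m * s m)) := by
  simp only [klDiv2, logb, ← mul_div_assoc, ← sum_div, ge_iff_le]
  exact div_le_div_of_nonneg_right (neg_two_mul_log_sum_sqrt_mul_le hr hrs habs)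
    (log_pos one_lt_two).le

theorem klDiv_ge_neg_two_log_fid {S : Type} [Fintype S]
    (r s : S → ℝ) (hr : ∀ m, 0 ≤ r m) (hs : ∀ m, 0 ≤ s m)
    (hrs : ∑ m, r m = 1) (hss : ∑ m, s m = 1)
    (habs : ∀ m, 0 < r m → 0 < s m) :
    klDiv2 r s ≥ -2 * Real.logb 2 (∑ m, Real.sqrt (r m * s m)) :=
  klDiv_ge_neg_two_log_fid_general r s hr hrs habs
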